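/- Combining Lemmas: Let B_a (a ∈ A finite, |A| odd or general) be finite sets with subsets S_a ⊆ B_a and labelings f_a : B_a → C, and let g_a = argmax-with-tiebreak of f_a's counts. Define MAY_a = LOCAL(f_a, S_a) ∪ {g_a}. If for every combination e ∈ ∏_a MAY_a the majority label of e equals c*, then for any family f'_a : B_a → C with f'_a agreeing with f_a on S_a for all a, the majority label of (g(f'_a))_{a∈A} equals c*. -/

import Mathlib

/-- Number of elements of `B` labeled `c` by `f`. -/
def voteCount {β C : Type*} [DecidableEq C] (B : Finset β) (f : β → C) (c : C) : ℕ :=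
  (B.filter fun b => f b = c).card

/-- `c` is the argmax of vote counts over `B` with smaller-label tie-breaking. -/
def majWins {β C : Type*} [DecidableEq C] [LinearOrder C]
    (B : Finset β) (f : β → C) (c : C) : Prop :=
  ∀ c' ≠ c, voteCount B f c' + (if c' < c then 1 else 0) ≤ voteCount B f c

/-- The set of local-malicious labels (Definition 1 of the paper). -/
def localSet {β C : Type*} [DecidableEq β] [DecidableEq C] [LinearOrder C]
    (B S : Finset β) (f : β → C) (c₁ : C) : Set C :=
  {c | c ≠ c₁ ∧ voteCount S f c₁ <
    voteCount S f c + (B \ S).card + (if c < c₁ then 1 else 0)}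

/-
If `f'` agrees with `f` on `S ⊆ B`, then passing from `f'` on `B` to `f` on `S` can lower the
count of any label by at most `|B \ S|` and cannot raise it. So whenever the winner `g'` of `f'`
differs from the reference label `g`, the inequality saying that `g'` beats `g` for `f'` turns into
the inequality defining `g' ∈ LOCAL(f, S)`. Hence the tuple of winners `(g'_a)` is one of the
combinations in `∏_a MAY_a`, whose majority label is `cstar` by hypothesis.
-/

section VoteCount

variable {β C : Type*} [DecidableEq C]

lemma voteCount_mono {S B : Finset β} (h : S ⊆ B) (f : β → C) (c : C) :
    voteCount S f c ≤ voteCount B f c :=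
  Finset.card_le_card (Finset.filter_subset_filter _ h)

lemma voteCount_le_add_card_sdiff [DecidableEq β] (S B : Finset β) (f : β → C) (c : C) :
    voteCount B f c ≤ voteCount S f c + (B \ S).card :=
  calc voteCount B f c ≤ voteCount (S ∪ B \ S) f c := by
        rw [Finset.union_sdiff_self_eq_union]
        exact voteCount_mono Finset.subset_union_right f c
    _ ≤ voteCount S f c + voteCount (B \ S) f c := by
        unfold voteCount
        rw [Finset.filter_union]
        exact Finset.card_union_le _ _
    _ ≤ voteCount S f c + (B \ S).card := by
        gcongr
        exact Finset.card_filter_le _ _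

lemma voteCount_congr {S : Finset β} {f f' : β → C} (h : ∀ b ∈ S, f' b = f b) (c : C) :
    voteCount S f' c = voteCount S f c :=
  congrArg Finset.card (Finset.filter_congr fun b hb => by rw [h b hb])

end VoteCount

section LocalSet

variable {β C : Type*} [DecidableEq β] [DecidableEq C] [LinearOrder C]

lemma mem_localSet_of_majWins {B S : Finset β} (hS : S ⊆ B) {f f' : β → C}
    (hf : ∀ b ∈ S, f' b = f b) {c c' : C} (hc' : majWins B f' c') (hne : c' ≠ c) :
    c' ∈ localSet B S f c := by
  have hbeat := hc' c hne.symm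
  have hc : voteCount S f c ≤ voteCount B f' c :=
    voteCount_congr hf c ▸ voteCount_mono hS f' c
  have hc'_le : voteCount B f' c' ≤ voteCount S f c' + (B \ S).card :=
    voteCount_congr hf c' ▸ voteCount_le_add_card_sdiff S B f' c'
  refine ⟨hne, ?_⟩
  -- exactly one of the two tie-breaking bonuses is `1`
  rcases hne.lt_or_gt with hlt | hgt
  · simp only [if_pos hlt, if_neg hlt.not_gt] at hbeat ⊢
    omega
  · simp only [if_pos hgt, if_neg hgt.not_gt] at hbeat ⊢
    omega

lemma mem_localSet_union_of_majWins {B S : Finset β} (hS : S ⊆ B) {f f' : β → C}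
    (hf : ∀ b ∈ S, f' b = f b) {c c' : C} (hc' : majWins B f' c') :
    c' ∈ localSet B S f c ∪ {c} := by
  by_cases hne : c' = c
  · exact Or.inr hne
  · exact Or.inl (mem_localSet_of_majWins hS hf hc' hne)

end LocalSet

theorem majority_invariant_certification_general {ι β C : Type*} [DecidableEq β]
    [DecidableEq C] [LinearOrder C]
    (A : Finset ι) (B S : ι → Finset β) (hS : ∀ a ∈ A, S a ⊆ B a)
    (f : ι → β → C) (g : ι → C) (cstar : C)
    (hinv : ∀ e : ι → C,
      (∀ a ∈ A, e a ∈ localSet (B a) (S a) (f a) (g a) ∪ {g a}) →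
      majWins A e cstar) :
    ∀ f' : ι → β → C, (∀ a ∈ A, ∀ b ∈ S a, f' a b = f a b) →
      ∀ g' : ι → C, (∀ a ∈ A, majWins (B a) (f' a) (g' a)) →
        majWins A g' cstar :=
  fun _ hf' g' hg' =>
    hinv g' fun a ha => mem_localSet_union_of_majWins (hS a ha) (hf' a ha) (hg' a ha)

/-- Theorem 2 at a single patch region: if every combination of labels from the MAY
sets `LOCAL(f_a,S_a) ∪ {g_a}` has majority `cstar`, then for every family `f'_a`
agreeing with `f_a` on `S_a`, the tuple of argmax labels of the `f'_a` has majority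
label `cstar`. -/
theorem majority_invariant_certification {ι β C : Type*} [DecidableEq β]
    [DecidableEq C] [LinearOrder C]
    (A : Finset ι) (hA : A.Nonempty) (B S : ι → Finset β) (hS : ∀ a ∈ A, S a ⊆ B a)
    (f : ι → β → C) (g : ι → C) (hg : ∀ a ∈ A, majWins (B a) (f a) (g a)) (cstar : C)
    (hinv : ∀ e : ι → C,
      (∀ a ∈ A, e a ∈ localSet (B a) (S a) (f a) (g a) ∪ {g a}) →
      majWins A e cstar) :
    ∀ f' : ι → β → C, (∀ a ∈ A, ∀ b ∈ S a, f' a b = f a b) →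
      ∀ g' : ι → C, (∀ a ∈ A, majWins (B a) (f' a) (g' a)) →
        majWins A g' cstar :=
  majority_invariant_certification_general A B S hS f g cstar hinv
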